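/- arXiv:2011.13610 — 3 statements merged into one kernel-verified Lean document; each statement's English description precedes it below -/
import Mathlib

section
/- Let R = ⋃_{i=1}^r R_i be a finite union of disjoint bounded open intervals in [0,∞), A a measurable set with 0 < ε(A) = ess sup_ω μ_ω(A), and define p_i = max{k ≥ 1 : T_ω^k(A) ≤ inf R_i}, q_i = max{k ≥ 1 : T_ω^k(A) ≤ sup R_i} − p_i, where T_ω^k(A) = ∑_{j=1}^k μ_{θ^j ω}(A). Then for P-a.e. ω, | E_{μ_ω}( N_A(ω,·)(R) ) − Leb(R) | ≤ 2 r ε(A), where N_A(ω,x)(R) = ∑_{i=1}^r ∑_{j=p_i+1}^{p_i+q_i} 1_A(f_ω^j x). -/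
/-!
Integrating term by term, equivariance `(f_ω^j)_* μ_ω = μ_{θ^j ω}` turns the expected number of
hits of `A` at times `p_i < j ≤ p_i + q_i` into `T(p_i + q_i) - T(p_i)`. Since `T` increases in
steps of at most `ε`, `T(p_i)` lies within `ε` below `a_i` and `T(p_i + q_i)` within `ε` below
`b_i`, so each interval contributes an error of at most `ε`.
-/

open MeasureTheory Finset

/-- Random composition `f_{θ^{k-1}ω} ∘ ⋯ ∘ f_ω`. -/
def rcomp {Ω X : Type*} (θ : Ω → Ω) (f : Ω → X → X) : ℕ → Ω → X → X
  | 0, _, x => x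
  | k + 1, ω, x => rcomp θ f k (θ ω) (f ω x)

section Equivariance

variable {α β : Type*} [MeasurableSpace α] [MeasurableSpace β] {μ : Measure α} {ν : Measure β}
  {g : α → β} {s : Set β}

-- A nonzero push-forward forces `g` to be a.e.-measurable, as `Measure.map` is junk `0` otherwise.
theorem integrable_indicator_one_comp_of_map_eq [NeZero ν] [IsFiniteMeasure ν]
    (hg : μ.map g = ν) (hs : MeasurableSet s) :
    Integrable (fun x => s.indicator (fun _ => (1 : ℝ)) (g x)) μ := by
  have hgm : AEMeasurable g μ := .of_map_ne_zero (hg ▸ NeZero.ne ν)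
  refine (integrable_map_measure (measurable_const.indicator hs).aestronglyMeasurable hgm).mp ?_
  exact hg ▸ (integrable_const (1 : ℝ)).indicator hs

theorem integral_indicator_one_comp_of_map_eq [NeZero ν] (hg : μ.map g = ν)
    (hs : MeasurableSet s) :
    ∫ x, s.indicator (fun _ => (1 : ℝ)) (g x) ∂μ = ν.real s := by
  have hgm : AEMeasurable g μ := .of_map_ne_zero (hg ▸ NeZero.ne ν)
  rw [← integral_map hgm (measurable_const.indicator hs).aestronglyMeasurable, hg]
  exact integral_indicator_one hs

end Equivariance

theorem Finset.sum_Icc_succ_eq_sub {M : Type*} [AddCommGroup M] (w : ℕ → M) {m n : ℕ}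
    (hmn : m ≤ n) :
    ∑ j ∈ Icc (m + 1) n, w j = ∑ j ∈ Icc 1 n, w j - ∑ j ∈ Icc 1 m, w j := by
  have hIcc_one (k : ℕ) : Icc 1 k = Ioc 0 k := Icc_add_one_left_eq_Ioc 0 k
  rw [eq_sub_iff_add_eq', Icc_add_one_left_eq_Ioc, hIcc_one, hIcc_one,
    sum_Ioc_consecutive _ m.zero_le hmn]

theorem abs_sub_sub_le_of_steps_le {T : ℕ → ℝ} {ε : ℝ} (hstep : ∀ k, T (k + 1) ≤ T k + ε)
    {m n : ℕ} {a b : ℝ} (ha : T m ≤ a ∧ a < T (m + 1)) (hb : T n ≤ b ∧ b < T (n + 1)) :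
    |(T n - T m) - (b - a)| ≤ ε := by
  have := hstep m
  have := hstep n
  rw [abs_le]
  constructor <;> linarith [ha.1, ha.2, hb.1, hb.2]

theorem stmt_4_general {Ω X : Type*} [MeasurableSpace X]
    (θ : Ω → Ω) (f : Ω → X → X)
    (μ : Ω → Measure X) [∀ ω', IsProbabilityMeasure (μ ω')] (ω : Ω)
    (A : Set X) (hA : MeasurableSet A)
    (r : ℕ)
    (a b : Fin r → ℝ)
    (ε : ℝ)
    (hεA : ∀ j : ℕ, (μ (θ^[j] ω) A).toReal ≤ ε)
    (hequiv : ∀ j : ℕ, Measure.map (rcomp θ f j ω) (μ ω) = μ (θ^[j] ω))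
    (T : ℕ → ℝ) (hT : ∀ k, T k = ∑ j ∈ Finset.Icc 1 k, (μ (θ^[j] ω) A).toReal)
    (p q : Fin r → ℕ)
    (hp : ∀ i, T (p i) ≤ a i ∧ a i < T (p i + 1))
    (hq : ∀ i, T (p i + q i) ≤ b i ∧ b i < T (p i + q i + 1)) :
    |(∫ x, (∑ i : Fin r, ∑ j ∈ Finset.Icc (p i + 1) (p i + q i),
          Set.indicator A (fun _ => (1:ℝ)) (rcomp θ f j ω x)) ∂(μ ω)) -
        ∑ i : Fin r, (b i - a i)| ≤ 2 * r * ε := by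
  have hε : 0 ≤ ε := ENNReal.toReal_nonneg.trans (hεA 0)
  have hstep : ∀ k, T (k + 1) ≤ T k + ε := fun k => by
    rw [hT, hT, sum_Icc_succ_top (by omega)]
    linarith [hεA (k + 1)]
  have hint (j : ℕ) := integrable_indicator_one_comp_of_map_eq (hequiv j) hA
  have hmean (i : Fin r) : ∫ x, ∑ j ∈ Icc (p i + 1) (p i + q i),
      A.indicator (fun _ => (1 : ℝ)) (rcomp θ f j ω x) ∂μ ω = T (p i + q i) - T (p i) := by
    rw [integral_finsetSum _ fun j _ => hint j, hT, hT, ← sum_Icc_succ_eq_sub _ (by omega)]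
    exact sum_congr rfl fun j _ => integral_indicator_one_comp_of_map_eq (hequiv j) hA
  rw [integral_finsetSum _ fun i _ => integrable_finsetSum _ fun j _ => hint j,
    ← sum_sub_distrib]
  calc _ ≤ ∑ i : Fin r, |(T (p i + q i) - T (p i)) - (b i - a i)| := by
        simpa only [hmean] using abs_sum_le_sum_abs _ _
    _ ≤ ∑ _i : Fin r, ε := sum_le_sum fun i _ => abs_sub_sub_le_of_steps_le hstep (hp i) (hq i)
    _ = r * ε := by simp
    _ ≤ 2 * r * ε := by linarith [mul_nonneg (Nat.cast_nonneg (α := ℝ) r) hε]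

theorem stmt_4 {Ω X : Type*} [MeasurableSpace X]
    (θ : Ω → Ω) (f : Ω → X → X) (hmf : ∀ ω', Measurable (f ω'))
    (μ : Ω → Measure X) [∀ ω', IsProbabilityMeasure (μ ω')] (ω : Ω)
    (A : Set X) (hA : MeasurableSet A)
    (r : ℕ) (hr : 1 ≤ r)
    (a b : Fin r → ℝ) (hab : ∀ i, 0 ≤ a i ∧ a i < b i)
    (hdisj : Pairwise fun i j => Disjoint (Set.Ioo (a i) (b i)) (Set.Ioo (a j) (b j)))
    (ε : ℝ) (hεpos : 0 < ε)
    (hεA : ∀ j : ℕ, (μ (θ^[j] ω) A).toReal ≤ ε)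
    (hequiv : ∀ j : ℕ, Measure.map (rcomp θ f j ω) (μ ω) = μ (θ^[j] ω))
    (T : ℕ → ℝ) (hT : ∀ k, T k = ∑ j ∈ Finset.Icc 1 k, (μ (θ^[j] ω) A).toReal)
    (p q : Fin r → ℕ)
    (hp : ∀ i, T (p i) ≤ a i ∧ a i < T (p i + 1))
    (hq : ∀ i, T (p i + q i) ≤ b i ∧ b i < T (p i + q i + 1)) :
    |(∫ x, (∑ i : Fin r, ∑ j ∈ Finset.Icc (p i + 1) (p i + q i),
          Set.indicator A (fun _ => (1:ℝ)) (rcomp θ f j ω x)) ∂(μ ω)) -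
        ∑ i : Fin r, (b i - a i)| ≤ 2 * r * ε :=
  stmt_4_general θ f μ ω A hA r a b ε hεA hequiv T hT p q hp hq
end

section
/- Let r be irrational and let Q(ω) be, for each ω ∈ [0,1), a square 0-1 matrix (of fixed size b) with at least one 1 in every row and column, such that Q(ω) has all entries equal to 1 whenever ω lies in a fixed nonempty open interval I ⊆ [0,1). Then there exists M such that for every ω the product Q(ω)·Q(ω+r)·…·Q(ω+(M−1)r) (addition mod 1) has all entries strictly positive. -/
/-!
The multiples of an irrational `r` are dense in the circle `ℝ/ℤ`, so every orbit of the rotation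
enters the open arc `I`; by compactness of the circle it does so within a bounded number `M` of
steps, uniformly in the starting point. Hence each product of `M` consecutive matrices contains an
all-ones factor, and a product of allowable matrices with one positive factor is positive.
-/

open Set

namespace Matrix

variable {l m n o R : Type*} [Fintype m] [Semiring R] [PartialOrder R] [IsStrictOrderedRing R]

lemma mul_apply_nonneg {A : Matrix l m R} {B : Matrix m o R} (hA : ∀ i k, 0 ≤ A i k)
    (hB : ∀ k j, 0 ≤ B k j) (i : l) (j : o) : 0 ≤ (A * B) i j :=
  Finset.sum_nonneg fun k _ => mul_nonneg (hA i k) (hB k j)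

lemma mul_apply_pos {A : Matrix l m R} {B : Matrix m o R} (hA : ∀ i k, 0 ≤ A i k)
    (hB : ∀ k j, 0 ≤ B k j) {i : l} {k : m} {j : o} (hik : 0 < A i k) (hkj : 0 < B k j) :
    0 < (A * B) i j :=
  Finset.sum_pos' (fun k' _ => mul_nonneg (hA i k') (hB k' j))
    ⟨k, Finset.mem_univ k, mul_pos hik hkj⟩

variable [Fintype n] [DecidableEq n]

/-- Seneta's *allowable* matrices. -/
def allowable : Submonoid (Matrix n n R) where
  carrier := {A | (∀ i j, 0 ≤ A i j) ∧ (∀ i, ∃ j, 0 < A i j) ∧ ∀ j, ∃ i, 0 < A i j}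
  one_mem' := by
    refine ⟨fun i j => ?_, fun i => ⟨i, by simp⟩, fun j => ⟨j, by simp⟩⟩
    by_cases h : i = j <;> simp [one_apply, h]
  mul_mem' := by
    rintro A B ⟨hA, hArow, hAcol⟩ ⟨hB, hBrow, hBcol⟩
    refine ⟨mul_apply_nonneg hA hB, fun i => ?_, fun j => ?_⟩
    · obtain ⟨k, hik⟩ := hArow i
      obtain ⟨j, hkj⟩ := hBrow k
      exact ⟨j, mul_apply_pos hA hB hik hkj⟩
    · obtain ⟨k, hkj⟩ := hBcol j
      obtain ⟨i, hik⟩ := hAcol k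
      exact ⟨i, mul_apply_pos hA hB hik hkj⟩

lemma mem_allowable {A : Matrix n n R} :
    A ∈ allowable ↔ (∀ i j, 0 ≤ A i j) ∧ (∀ i, ∃ j, 0 < A i j) ∧ ∀ j, ∃ i, 0 < A i j :=
  Iff.rfl

lemma mul_mul_apply_pos_of_mem_allowable {A B C : Matrix n n R} (hA : A ∈ allowable)
    (hB : ∀ i j, 0 < B i j) (hC : C ∈ allowable) (i j : n) : 0 < (A * B * C) i j := by
  obtain ⟨hA, hArow, -⟩ := hA
  obtain ⟨hC, -, hCcol⟩ := hC
  have hB' : ∀ k l, 0 ≤ B k l := fun k l => (hB k l).le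
  obtain ⟨k, hik⟩ := hArow i
  obtain ⟨l, hlj⟩ := hCcol j
  exact mul_apply_pos (mul_apply_nonneg hA hB') hC (mul_apply_pos hA hB' hik (hB k l)) hlj

lemma list_prod_apply_pos_of_mem_allowable {L : List (Matrix n n R)}
    (hL : ∀ A ∈ L, A ∈ allowable) {B : Matrix n n R} (hBL : B ∈ L) (hB : ∀ i j, 0 < B i j) :
    ∀ i j, 0 < L.prod i j := by
  obtain ⟨s, t, rfl⟩ := List.append_of_mem hBL
  rw [List.prod_append, List.prod_cons, ← mul_assoc]
  exact mul_mul_apply_pos_of_mem_allowable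
    (allowable.list_prod_mem fun A hA => hL A (List.mem_append_left _ hA)) hB
    (allowable.list_prod_mem fun A hA => hL A (List.mem_append_right _ (List.mem_cons_of_mem _ hA)))

end Matrix

theorem exists_forall_exists_lt_add_nsmul_mem {G : Type*} [AddGroup G] [TopologicalSpace G]
    [ContinuousAdd G] [CompactSpace G] {a : G} (ha : DenseRange fun n : ℕ => n • a)
    {V : Set G} (hV : IsOpen V) (hV' : V.Nonempty) : ∃ N : ℕ, ∀ x, ∃ n < N, x + n • a ∈ V := by
  let W : ℕ → Set G := fun N => ⋃ n < N, (· + n • a) ⁻¹' V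
  have hW_open (N : ℕ) : IsOpen (W N) :=
    isOpen_biUnion fun n _ => hV.preimage (continuous_add_const _)
  have hW_mono : Monotone W := fun N N' hNN' =>
    biUnion_mono (fun n hn => lt_of_lt_of_le hn hNN') fun _ _ => subset_rfl
  have hW_cover : univ ⊆ ⋃ N, W N := fun x _ => by
    obtain ⟨n, hn⟩ := ha.exists_mem_open (hV.preimage (continuous_const_add x))
      (hV'.preimage (add_left_surjective x))
    exact mem_iUnion.2 ⟨n + 1, mem_iUnion₂.2 ⟨n, n.lt_succ_self, hn⟩⟩
  obtain ⟨N, hN⟩ := isCompact_univ.elim_directed_cover W hW_open hW_cover hW_mono.directed_le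
  exact ⟨N, fun x => by simpa [W] using hN (mem_univ x)⟩

theorem AddCircle.denseRange_nsmul_coe_of_irrational {p r : ℝ} [Fact (0 < p)]
    (hr : Irrational (r / p)) : DenseRange fun n : ℕ => n • (r : AddCircle p) :=
  denseRange_zsmul_iff_nsmul.1 (AddCircle.denseRange_zsmul_coe_iff.2 hr)

theorem Int.fract_mem_of_coe_mem_image {s : Set ℝ} (hs : s ⊆ Ico 0 1) {z : ℝ}
    (hz : (z : AddCircle (1 : ℝ)) ∈ ((↑) : ℝ → AddCircle (1 : ℝ)) '' s) : Int.fract z ∈ s := by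
  obtain ⟨y, hy, hyz⟩ := hz
  have hfract : Int.fract z ∈ Ico (0 : ℝ) (0 + 1) := by
    rw [zero_add]; exact ⟨Int.fract_nonneg z, Int.fract_lt_one z⟩
  have hy' : y ∈ Ico (0 : ℝ) (0 + 1) := by rw [zero_add]; exact hs hy
  rwa [← (AddCircle.coe_eq_coe_iff_of_mem_Ico hy' hfract).1 (by rw [hyz, AddCircle.coe_fract])]

theorem stmt_11 (r : ℝ) (hr : Irrational r) (b : ℕ)
    (Q : ℝ → Matrix (Fin b) (Fin b) ℝ)
    (h01 : ∀ ω i j, Q ω i j = 0 ∨ Q ω i j = 1)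
    (hrow : ∀ ω i, ∃ j, Q ω i j = 1)
    (hcol : ∀ ω j, ∃ i, Q ω i j = 1)
    (c d : ℝ) (hc : 0 ≤ c) (hcd : c < d) (hd : d ≤ 1)
    (hI : ∀ ω : ℝ, Int.fract ω ∈ Set.Ioo c d → ∀ i j, Q ω i j = 1) :
    ∃ M : ℕ, 1 ≤ M ∧ ∀ ω : ℝ, ∀ i j,
      0 < ((List.range M).map (fun k : ℕ => Q (ω + k * r))).prod i j := by
  obtain ⟨M, hM⟩ := exists_forall_exists_lt_add_nsmul_mem
    (AddCircle.denseRange_nsmul_coe_of_irrational (p := 1) (by rwa [div_one]))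
    (QuotientAddGroup.isOpenMap_coe _ isOpen_Ioo) ((nonempty_Ioo.2 hcd).image _)
  have hQ (ω : ℝ) : Q ω ∈ Matrix.allowable := by
    refine Matrix.mem_allowable.2 ⟨fun i j => ?_, fun i => ?_, fun j => ?_⟩
    · rcases h01 ω i j with h | h <;> simp [h]
    · obtain ⟨j, hj⟩ := hrow ω i
      exact ⟨j, by simp [hj]⟩
    · obtain ⟨i, hi⟩ := hcol ω j
      exact ⟨i, by simp [hi]⟩
  refine ⟨M, (hM 0).elim fun n hn => Nat.one_le_of_lt hn.1, fun ω => ?_⟩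
  obtain ⟨n, hnM, hn⟩ := hM ω
  rw [← AddCircle.coe_nsmul, ← AddCircle.coe_add, nsmul_eq_mul] at hn
  have hfract := Int.fract_mem_of_coe_mem_image
    (Ioo_subset_Ico_self.trans (Ico_subset_Ico hc hd)) hn
  refine Matrix.list_prod_apply_pos_of_mem_allowable (by simpa using fun k _ => hQ _)
    (List.mem_map.2 ⟨n, List.mem_range.2 hnM, rfl⟩) fun i j => ?_
  rw [hI _ hfract i j]
  exact one_pos
end

section
/- Suppose a family of probability measures μ_ω on a shift space satisfies: (quasi-multiplicativity) c^{-1} μ_ω(C_n(x)) μ_{θ^n ω}(C_m(σ^n x)) ≤ μ_ω(C_{n+m}(x)) ≤ c μ_ω(C_n(x)) μ_{θ^n ω}(C_m(σ^n x)) for all x in the fiber, and (uniform decay) μ_ω(C_n(x)) ≤ c e^{-an} for all ω, x, n. Then for any point y and any 1 ≤ j ≤ n, μ_ω(C_n(y) ∩ σ^{-j} C_n(y)) ≤ c² μ_ω(C_n(y)) e^{-aj}. -/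
open MeasureTheory

/-- The left shift on sequences. -/
def shiftMap {α : Type*} : (ℕ → α) → (ℕ → α) := fun z i => z (i + 1)

/-- The cylinder `C_n(x)` of sequences agreeing with `x` on the first `n` coordinates. -/
def cyl {α : Type*} (n : ℕ) (x : ℕ → α) : Set (ℕ → α) := {z | ∀ i < n, z i = x i}

lemma shiftMap_iter {α : Type*} (n : ℕ) (z : ℕ → α) (i : ℕ) :
    (shiftMap^[n] z) i = z (i + n) := by
  induction n generalizing z with
  | zero => rfl
  | succ k ih =>
    rw [Function.iterate_succ_apply, ih]
    show z (i + k + 1) = z (i + (k + 1))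
    congr 1

theorem stmt_14 {Ω α : Type*} [MeasurableSpace (ℕ → α)]
    (θ : Ω → Ω) (μ : Ω → Measure (ℕ → α)) [∀ ω, IsProbabilityMeasure (μ ω)]
    (c a : ℝ) (hc : 0 < c) (ha : 0 < a)
    (hqm : ∀ ω : Ω, ∀ n m : ℕ, ∀ x : ℕ → α,
      ENNReal.ofReal c⁻¹ * (μ ω (cyl n x) * μ (θ^[n] ω) (cyl m (shiftMap^[n] x))) ≤
          μ ω (cyl (n + m) x) ∧
        μ ω (cyl (n + m) x) ≤
          ENNReal.ofReal c * (μ ω (cyl n x) * μ (θ^[n] ω) (cyl m (shiftMap^[n] x))))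
    (hdecay : ∀ ω : Ω, ∀ x : ℕ → α, ∀ n : ℕ,
      μ ω (cyl n x) ≤ ENNReal.ofReal (c * Real.exp (-a * n))) :
    ∀ ω : Ω, ∀ y : ℕ → α, ∀ j n : ℕ, 1 ≤ j → j ≤ n →
      μ ω (cyl n y ∩ shiftMap^[j] ⁻¹' cyl n y) ≤
        ENNReal.ofReal (c ^ 2 * Real.exp (-a * j)) * μ ω (cyl n y) := by
  intro ω y j n hj hjn
  set S := cyl n y ∩ shiftMap^[j] ⁻¹' cyl n y with hS
  by_cases hne : S = ∅
  · simp [hne]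
  · obtain ⟨z, hz⟩ := Set.nonempty_iff_ne_empty.mpr hne
    obtain ⟨hz1, hz2⟩ := hz
    have hz2' : ∀ i < n, z (i + j) = y i := by
      intro i hi
      have := hz2 i hi
      rwa [shiftMap_iter] at this
    -- S = cyl (n+j) z
    have hSeq : S = cyl (n + j) z := by
      ext w
      constructor
      · rintro ⟨hw1, hw2⟩
        intro i hi
        by_cases hin : i < n
        · rw [hw1 i hin, hz1 i hin]
        · have hji : j ≤ i := le_trans hjn (Nat.le_of_not_lt hin)
          have hlt : i - j < n := by omega
          have : i - j + j = i := Nat.sub_add_cancel hji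
          have hw' : w (i - j + j) = y (i - j) := by
            have := hw2 (i - j) hlt
            rwa [shiftMap_iter] at this
          rw [this] at hw'
          rw [hw', ← hz2' (i - j) hlt, Nat.sub_add_cancel hji]
      · intro hw
        refine ⟨fun i hi => ?_, fun i hi => ?_⟩
        · rw [hw i (by omega), hz1 i hi]
        · show (shiftMap^[j] w) i = y i
          rw [shiftMap_iter, hw (i + j) (by omega), hz2' i hi]
    -- cyl n z = cyl n y
    have hcyl : cyl n z = cyl n y := by
      ext w
      constructor <;> intro hw i hi
      · rw [hw i hi, hz1 i hi]
      · rw [hw i hi, ← hz1 i hi]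
    have h1 := (hqm ω n j z).2
    have h2 := hdecay (θ^[n] ω) (shiftMap^[n] z) j
    calc μ ω S = μ ω (cyl (n + j) z) := by rw [hSeq]
      _ ≤ ENNReal.ofReal c * (μ ω (cyl n z) * μ (θ^[n] ω) (cyl j (shiftMap^[n] z))) := h1
      _ ≤ ENNReal.ofReal c * (μ ω (cyl n y) * ENNReal.ofReal (c * Real.exp (-a * j))) := by
          rw [hcyl]
          exact mul_le_mul_right (mul_le_mul_right h2 _) _
      _ = ENNReal.ofReal (c ^ 2 * Real.exp (-a * j)) * μ ω (cyl n y) := by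
          rw [← mul_assoc, mul_comm (ENNReal.ofReal c) (μ ω (cyl n y)), mul_assoc,
            ← ENNReal.ofReal_mul hc.le, mul_comm]
          ring_nf
end
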